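/- Let X be a reflexive Banach space with the sequential Kadec–Klee property, let F be a Banach space and N ∈ ℕ. Then for every weakly sequentially continuous continuous N-homogeneous polynomial P from X to F with ‖P‖=1 and every ε>0 there exists η(ε,P)>0 such that whenever x in the unit sphere of X satisfies ‖P(x)‖ > 1−η(ε,P), there exists x₀ in the unit sphere of X with ‖P(x₀)‖ = 1 and ‖x₀−x‖ < ε. -/

import Mathlib

/-!
Suppose not: then there are unit vectors `w n` with `‖P (w n)‖ → 1`, each at distance at least `ε`
from every norm-attaining point of the sphere. In a reflexive space bounded sequences have weakly
convergent subsequences (pass to the closed span of the sequence: it is separable and reflexive, so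
its dual is separable and sequential Banach–Alaoglu applies in its bidual). Along such a
subsequence `w (φ k) ⇀ x` with `‖x‖ ≤ 1`, weak sequential continuity gives `‖P x‖ = 1`, and
homogeneity (`‖P x‖ ≤ ‖x‖ ^ N`) forces `‖x‖ = 1`. Kadec–Klee then turns the weak convergence into
norm convergence, so some `w (φ k)` lies within `ε` of the norm-attaining point `x`.
-/

open Filter Topology

/-- The norm of the `N`-homogeneous polynomial `x ↦ A(x,…,x)` associated to a continuous
`N`-linear map `A`, namely `sup {‖A(x,…,x)‖ : ‖x‖ ≤ 1}`. -/
noncomputable def polyNorm {𝕜 X Z : Type*} [RCLike 𝕜] [NormedAddCommGroup X] [NormedSpace 𝕜 X]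
    [NormedAddCommGroup Z] [NormedSpace 𝕜 Z] {N : ℕ}
    (A : ContinuousMultilinearMap 𝕜 (fun _ : Fin N => X) Z) : ℝ :=
  sSup {r : ℝ | ∃ x : X, ‖x‖ ≤ 1 ∧ r = ‖A (fun _ => x)‖}

open TopologicalSpace

namespace NormedSpace

variable {𝕜 X : Type*} [RCLike 𝕜] [NormedAddCommGroup X] [NormedSpace 𝕜 X]

theorem exists_strongDual_eq_zero_on_of_notMem {Y : Submodule 𝕜 X} (hY : IsClosed (Y : Set X))
    {x : X} (hx : x ∉ Y) : ∃ f : StrongDual 𝕜 X, (∀ y ∈ Y, f y = 0) ∧ f x ≠ 0 := by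
  have : IsClosed (Y : Set X) := hY
  let Q : X →L[𝕜] X ⧸ Y := Y.mkQ.mkContinuous 1 fun m => by
    simpa using Submodule.Quotient.norm_mk_le Y m
  have hQ : ∀ z, Q z = 0 ↔ z ∈ Y := fun z => Submodule.Quotient.mk_eq_zero Y
  obtain ⟨g, -, hgx⟩ := exists_dual_vector 𝕜 (Q x) (norm_ne_zero_iff.mpr (mt (hQ x).mp hx))
  refine ⟨g.comp Q, fun y hy => by simp [(hQ y).mpr hy], ?_⟩
  simpa [hgx] using mt (hQ x).mp hx

variable (𝕜 X) in
theorem separableSpace_of_separableSpace_strongDual [SeparableSpace (StrongDual 𝕜 X)] :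
    SeparableSpace X := by
  obtain ⟨u, hu⟩ := exists_dense_seq (StrongDual 𝕜 X)
  have hnorming : ∀ n, ∃ z : X, ‖z‖ ≤ 1 ∧ ‖u n‖ / 2 ≤ ‖u n z‖ := by
    intro n
    rcases eq_or_ne (u n) 0 with h | h
    · exact ⟨0, by simp [h]⟩
    · obtain ⟨z, hz1, hz2⟩ :=
        (u n).exists_lt_apply_of_lt_opNorm (half_lt_self (norm_pos_iff.mpr h))
      exact ⟨z, hz1.le, hz2.le⟩
  choose z hz1 hz2 using hnorming
  let Y : Submodule 𝕜 X := (Submodule.span 𝕜 (Set.range z)).topologicalClosure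
  have hY : Y = ⊤ := by
    by_contra hY
    obtain ⟨x, hx⟩ := (SetLike.exists_of_lt (lt_top_iff_ne_top.mpr hY)).imp fun _ h => h.2
    obtain ⟨f, hfY, hfx⟩ :=
      exists_strongDual_eq_zero_on_of_notMem (Submodule.isClosed_topologicalClosure _) hx
    have hf : 0 < ‖f‖ := norm_pos_iff.mpr fun h => hfx (by simp [h])
    obtain ⟨n, hn⟩ := Metric.denseRange_iff.mp hu f (‖f‖ / 4) (by positivity)
    rw [dist_eq_norm'] at hn
    have hzY : z n ∈ Y := Submodule.le_topologicalClosure _ (Submodule.subset_span ⟨n, rfl⟩)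
    have hsmall : ‖u n (z n)‖ ≤ ‖u n - f‖ := calc
      ‖u n (z n)‖ = ‖(u n - f) (z n)‖ := by simp [hfY _ hzY]
      _ ≤ ‖u n - f‖ := (u n - f).unit_le_opNorm _ (hz1 n)
    linarith [hz2 n, norm_sub_norm_le f (u n), norm_sub_rev f (u n)]
  have hsep : IsSeparable (Y : Set X) := (Set.countable_range z).isSeparable.span.closure
  rw [hY, Submodule.top_coe] at hsep
  exact isSeparable_univ_iff.mp hsep

theorem surjective_inclusionInDoubleDual_submodule
    (hrefl : Function.Surjective (inclusionInDoubleDual 𝕜 X))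
    {Y : Submodule 𝕜 X} (hY : IsClosed (Y : Set X)) :
    Function.Surjective (inclusionInDoubleDual 𝕜 Y) := by
  intro Λ
  let restrict : StrongDual 𝕜 X →L[𝕜] StrongDual 𝕜 Y :=
    (ContinuousLinearMap.compSL Y X 𝕜 (RingHom.id 𝕜) (RingHom.id 𝕜)).flip Y.subtypeL
  obtain ⟨x, hx⟩ := hrefl (Λ.comp restrict)
  have hΛ : ∀ f : StrongDual 𝕜 X, f x = Λ (restrict f) := fun f => congrArg (· f) hx
  have hxY : x ∈ Y := by
    by_contra hxY
    obtain ⟨f, hfY, hfx⟩ := exists_strongDual_eq_zero_on_of_notMem hY hxY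
    have : restrict f = 0 := by ext y; exact hfY y y.2
    exact hfx (by rw [hΛ f, this, map_zero])
  refine ⟨⟨x, hxY⟩, ContinuousLinearMap.ext fun g => ?_⟩
  obtain ⟨f, hf, -⟩ := exists_extension_norm_eq Y g
  have hfg : restrict f = g := ContinuousLinearMap.ext hf
  rw [dual_def, ← hf, ← hfg]
  exact hΛ f

theorem norm_le_of_forall_tendsto_apply {u : ℕ → X} {x : X} {R : ℝ} (hR : 0 ≤ R)
    (hu : ∀ n, ‖u n‖ ≤ R)
    (hux : ∀ f : StrongDual 𝕜 X, Tendsto (fun n => f (u n)) atTop (𝓝 (f x))) :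
    ‖x‖ ≤ R := by
  refine norm_le_dual_bound 𝕜 x hR fun f =>
    le_of_tendsto (hux f).norm (Eventually.of_forall fun n => ?_)
  calc ‖f (u n)‖ ≤ ‖f‖ * ‖u n‖ := f.le_opNorm _
    _ ≤ R * ‖f‖ := by rw [mul_comm]; gcongr; exact hu n

theorem exists_subseq_forall_tendsto_apply
    (hrefl : Function.Surjective (inclusionInDoubleDual 𝕜 X)) {u : ℕ → X} {R : ℝ}
    (hu : ∀ n, ‖u n‖ ≤ R) :
    ∃ φ : ℕ → ℕ, ∃ x : X, StrictMono φ ∧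
      ∀ f : StrongDual 𝕜 X, Tendsto (fun k => f (u (φ k))) atTop (𝓝 (f x)) := by
  let Y : Submodule 𝕜 X := (Submodule.span 𝕜 (Set.range u)).topologicalClosure
  have hYrefl : Function.Surjective (inclusionInDoubleDual 𝕜 Y) :=
    surjective_inclusionInDoubleDual_submodule hrefl (Submodule.isClosed_topologicalClosure _)
  have : SeparableSpace Y :=
    (Set.countable_range u).isSeparable.span.closure.separableSpace
  have : SeparableSpace (StrongDual 𝕜 (StrongDual 𝕜 Y)) :=
    hYrefl.denseRange.separableSpace (inclusionInDoubleDual 𝕜 Y).continuous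
  have : SeparableSpace (StrongDual 𝕜 Y) := separableSpace_of_separableSpace_strongDual 𝕜 _
  let y : ℕ → Y := fun n =>
    ⟨u n, Submodule.le_topologicalClosure _ (Submodule.subset_span ⟨n, rfl⟩)⟩
  obtain ⟨Λ, -, φ, hφ, hΛ⟩ := WeakDual.isSeqCompact_closedBall 𝕜 _ 0 R
    (x := fun n => StrongDual.toWeakDual (inclusionInDoubleDual 𝕜 Y (y n))) fun n => by
      simpa using (double_dual_bound 𝕜 Y (y n)).trans (hu n)
  obtain ⟨x, hx⟩ := hYrefl (WeakDual.toStrongDual Λ)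
  refine ⟨φ, x, hφ, fun f => ?_⟩
  have hfx : f x = Λ (f.comp Y.subtypeL) := congrArg (· (f.comp Y.subtypeL)) hx
  rw [hfx]
  exact ((WeakDual.eval_continuous (f.comp Y.subtypeL)).tendsto Λ).comp hΛ

end NormedSpace

section polyNorm

variable {𝕜 X Z : Type*} [RCLike 𝕜] [NormedAddCommGroup X] [NormedSpace 𝕜 X]
    [NormedAddCommGroup Z] [NormedSpace 𝕜 Z] {N : ℕ}

theorem norm_apply_le_polyNorm (A : ContinuousMultilinearMap 𝕜 (fun _ : Fin N => X) Z) {x : X}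
    (hx : ‖x‖ ≤ 1) : ‖A (fun _ => x)‖ ≤ polyNorm A := by
  refine le_csSup ⟨‖A‖, ?_⟩ ⟨x, hx, rfl⟩
  rintro _ ⟨z, hz, rfl⟩
  calc ‖A (fun _ => z)‖ ≤ ‖A‖ * ‖z‖ ^ N := by simpa using A.le_opNorm (fun _ => z)
    _ ≤ ‖A‖ := mul_le_of_le_one_right A.opNorm_nonneg (pow_le_one₀ (norm_nonneg z) hz)

theorem norm_apply_le_polyNorm_mul_pow (A : ContinuousMultilinearMap 𝕜 (fun _ : Fin N => X) Z)
    (x : X) : ‖A (fun _ => x)‖ ≤ polyNorm A * ‖x‖ ^ N := by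
  rcases eq_or_ne x 0 with rfl | hx
  · cases N with
    | zero => simpa using norm_apply_le_polyNorm A (norm_zero.le.trans zero_le_one)
    | succ n => simpa using A.map_coord_zero (m := fun _ => (0 : X)) 0 rfl
  have hxpos : 0 < ‖x‖ := norm_pos_iff.mpr hx
  have hA : A (fun _ => x) = ((‖x‖ : 𝕜) ^ N) • A (fun _ => (‖x‖⁻¹ : 𝕜) • x) := by
    have h := A.map_smul_univ (fun _ => (‖x‖ : 𝕜)) fun _ => (‖x‖⁻¹ : 𝕜) • x
    simp only [smul_smul, Finset.prod_const, Finset.card_univ, Fintype.card_fin] at h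
    rwa [mul_inv_cancel₀ (by exact_mod_cast hxpos.ne'), one_smul] at h
  calc ‖A (fun _ => x)‖ = ‖x‖ ^ N * ‖A (fun _ => (‖x‖⁻¹ : 𝕜) • x)‖ := by
        rw [hA, norm_smul, norm_pow, RCLike.norm_ofReal, abs_norm]
    _ ≤ ‖x‖ ^ N * polyNorm A := by
        gcongr
        exact norm_apply_le_polyNorm A (norm_smul_inv_norm hx).le
    _ = polyNorm A * ‖x‖ ^ N := mul_comm _ _

theorem polyNorm_eq_norm_apply_of_fin_zero
    (A : ContinuousMultilinearMap 𝕜 (fun _ : Fin 0 => X) Z) (x : X) :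
    polyNorm A = ‖A (fun _ => x)‖ := by
  have hconst : ∀ z : X, A (fun _ => z) = A (fun _ => x) := fun z =>
    congrArg A (Subsingleton.elim _ _)
  have hset : {r : ℝ | ∃ z : X, ‖z‖ ≤ 1 ∧ r = ‖A (fun _ => z)‖} = {‖A (fun _ => x)‖} := by
    ext r
    simp only [hconst, Set.mem_ofPred_eq, Set.mem_singleton_iff]
    exact ⟨fun ⟨_, _, h⟩ => h, fun h => ⟨0, by simp, h⟩⟩
  rw [polyNorm, hset, csSup_singleton]

theorem norm_eq_one_of_norm_apply_eq_one {A : ContinuousMultilinearMap 𝕜 (fun _ : Fin N => X) Z}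
    (hA : polyNorm A = 1) (hN : N ≠ 0) {x : X} (hx : ‖x‖ ≤ 1) (hAx : ‖A (fun _ => x)‖ = 1) :
    ‖x‖ = 1 := by
  have h := norm_apply_le_polyNorm_mul_pow A x
  rw [hA, hAx, one_mul, one_le_pow_iff_of_nonneg (norm_nonneg x) hN] at h
  exact le_antisymm hx h

end polyNorm

theorem exists_subseq_tendsto_of_tendsto_norm_apply {𝕜 X F : Type*} [RCLike 𝕜]
    [NormedAddCommGroup X] [NormedSpace 𝕜 X] [NormedAddCommGroup F] [NormedSpace 𝕜 F]
    (hrefl : Function.Surjective (NormedSpace.inclusionInDoubleDual 𝕜 X))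
    (hKK : ∀ (u : ℕ → X) (x : X),
      (∀ f : X →L[𝕜] 𝕜, Tendsto (fun n => f (u n)) atTop (𝓝 (f x))) →
      Tendsto (fun n => ‖u n‖) atTop (𝓝 ‖x‖) → Tendsto u atTop (𝓝 x))
    {N : ℕ} (hN : N ≠ 0) {A : ContinuousMultilinearMap 𝕜 (fun _ : Fin N => X) F}
    (hwsc : ∀ (u : ℕ → X) (x : X),
      (∀ f : X →L[𝕜] 𝕜, Tendsto (fun n => f (u n)) atTop (𝓝 (f x))) →
      Tendsto (fun n => A (fun _ => u n)) atTop (𝓝 (A (fun _ => x))))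
    (hA : polyNorm A = 1) {w : ℕ → X} (hw : ∀ n, ‖w n‖ = 1)
    (hAw : Tendsto (fun n => ‖A (fun _ => w n)‖) atTop (𝓝 1)) :
    ∃ φ : ℕ → ℕ, ∃ x : X, StrictMono φ ∧ ‖x‖ = 1 ∧ ‖A (fun _ => x)‖ = 1 ∧
      Tendsto (w ∘ φ) atTop (𝓝 x) := by
  obtain ⟨φ, x, hφ, hweak⟩ :=
    NormedSpace.exists_subseq_forall_tendsto_apply hrefl (u := w) (R := 1) fun n => (hw n).le
  have hx_le : ‖x‖ ≤ 1 :=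
    NormedSpace.norm_le_of_forall_tendsto_apply zero_le_one (fun n => (hw (φ n)).le) hweak
  have hAx : ‖A (fun _ => x)‖ = 1 :=
    tendsto_nhds_unique (hwsc _ x hweak).norm (hAw.comp hφ.tendsto_atTop)
  have hx : ‖x‖ = 1 := norm_eq_one_of_norm_apply_eq_one hA hN hx_le hAx
  refine ⟨φ, x, hφ, hx, hAx, hKK _ x hweak ?_⟩
  simp only [Function.comp_apply, hw, hx]
  exact tendsto_const_nhds

theorem stmt_13_general {𝕜 X F : Type*} [RCLike 𝕜] [NormedAddCommGroup X] [NormedSpace 𝕜 X]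
    [NormedAddCommGroup F] [NormedSpace 𝕜 F]
    (hrefl : Function.Surjective (NormedSpace.inclusionInDoubleDual 𝕜 X))
    (hKK : ∀ (u : ℕ → X) (x : X),
      (∀ f : X →L[𝕜] 𝕜, Tendsto (fun n => f (u n)) atTop (nhds (f x))) →
      Tendsto (fun n => ‖u n‖) atTop (nhds ‖x‖) →
      Tendsto u atTop (nhds x))
    {N : ℕ} (A : ContinuousMultilinearMap 𝕜 (fun _ : Fin N => X) F)
    (hwsc : ∀ (u : ℕ → X) (x : X),
      (∀ f : X →L[𝕜] 𝕜, Tendsto (fun n => f (u n)) atTop (nhds (f x))) →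
      Tendsto (fun n => A (fun _ => u n)) atTop (nhds (A (fun _ => x))))
    (hA : polyNorm A = 1) (ε : ℝ) (hε : 0 < ε) :
    ∃ η > (0 : ℝ), ∀ x : X, ‖x‖ = 1 → ‖A (fun _ => x)‖ > 1 - η →
      ∃ x₀ : X, ‖x₀‖ = 1 ∧ ‖A (fun _ => x₀)‖ = 1 ∧ ‖x₀ - x‖ < ε := by
  rcases eq_or_ne N 0 with rfl | hN
  · refine ⟨1, one_pos, fun x hx _ => ⟨x, hx, ?_, by simpa using hε⟩⟩
    rw [← polyNorm_eq_norm_apply_of_fin_zero A x, hA]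
  by_contra! hfar
  choose w hw hAw hwfar using fun n : ℕ => hfar (1 / (n + 1)) Nat.one_div_pos_of_nat
  have hAw_tendsto : Tendsto (fun n => ‖A (fun _ => w n)‖) atTop (𝓝 1) := by
    refine tendsto_of_tendsto_of_tendsto_of_le_of_le ?_ tendsto_const_nhds (fun n => (hAw n).le)
      fun n => norm_apply_le_polyNorm A (hw n).le |>.trans hA.le
    simpa using tendsto_one_div_add_atTop_nhds_zero_nat.const_sub (1 : ℝ)
  obtain ⟨φ, x, -, hx, hAx, hφ⟩ :=
    exists_subseq_tendsto_of_tendsto_norm_apply hrefl hKK hN hwsc hA hw hAw_tendsto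
  obtain ⟨k, hk⟩ := (hφ.eventually (Metric.ball_mem_nhds x hε)).exists
  exact (hwfar (φ k) x hx hAx).not_gt (by rwa [dist_eq_norm'] at hk)

/-- Let `X` be a reflexive Banach space (the canonical embedding into the
bidual is surjective) with the sequential Kadec–Klee property, and `F` a Banach space. Then
every weakly sequentially continuous norm-one `N`-homogeneous polynomial `P : X → F`
(represented by an `N`-linear map `A` via `P x = A(x,…,x)`) satisfies the local
Bishop–Phelps–Bollobás point estimate near its norm-attaining set. -/
theorem stmt_13 {𝕜 X F : Type*} [RCLike 𝕜] [NormedAddCommGroup X] [NormedSpace 𝕜 X]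
    [CompleteSpace X] [NormedAddCommGroup F] [NormedSpace 𝕜 F] [CompleteSpace F]
    (hrefl : Function.Surjective (NormedSpace.inclusionInDoubleDual 𝕜 X))
    (hKK : ∀ (u : ℕ → X) (x : X),
      (∀ f : X →L[𝕜] 𝕜, Tendsto (fun n => f (u n)) atTop (nhds (f x))) →
      Tendsto (fun n => ‖u n‖) atTop (nhds ‖x‖) →
      Tendsto u atTop (nhds x))
    {N : ℕ} (A : ContinuousMultilinearMap 𝕜 (fun _ : Fin N => X) F)
    (hwsc : ∀ (u : ℕ → X) (x : X),
      (∀ f : X →L[𝕜] 𝕜, Tendsto (fun n => f (u n)) atTop (nhds (f x))) →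
      Tendsto (fun n => A (fun _ => u n)) atTop (nhds (A (fun _ => x))))
    (hA : polyNorm A = 1) (ε : ℝ) (hε : 0 < ε) :
    ∃ η > (0 : ℝ), ∀ x : X, ‖x‖ = 1 → ‖A (fun _ => x)‖ > 1 - η →
      ∃ x₀ : X, ‖x₀‖ = 1 ∧ ‖A (fun _ => x₀)‖ = 1 ∧ ‖x₀ - x‖ < ε :=
  stmt_13_general hrefl hKK A hwsc hA ε hε
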